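/- For every n ∈ ℕ, the subgroup φ(⟨X ∪ Y ∪ {y} ∪ {t_0, …, t_{n−1}}⟩) is a free factor of F_b. -/

import Mathlib

/-- The generating alphabet `X ⊔ Y ⊔ {y} ⊔ {indexed family over ℕ}`.  In the domain
`F_a` the `ℕ`-indexed generators are the `t_n`; in the codomain `F_b` they are the
`z_n`. -/
abbrev ConstrGen (X Y : Type) : Type := X ⊕ Y ⊕ Unit ⊕ ℕ

/-- The distinguished generator `y`. -/
def yGen (X Y : Type) : ConstrGen X Y := Sum.inr (Sum.inr (Sum.inl ()))

/-- The `n`-th `ℕ`-indexed generator (`t_n` in `F_a`, `z_n` in `F_b`). -/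
def nGen (X Y : Type) (n : ℕ) : ConstrGen X Y := Sum.inr (Sum.inr (Sum.inr n))

/-- The homomorphism `φ : F_a → F_b` which fixes each generator in `X ⊔ Y ⊔ {y}`
and sends `t_n ↦ y·z_{n+1}⁻¹·z_n·z_{n+1}`. -/
def constrPhi (X Y : Type) : FreeGroup (ConstrGen X Y) →* FreeGroup (ConstrGen X Y) :=
  FreeGroup.lift fun g => match g with
    | Sum.inl x => FreeGroup.of (Sum.inl x)
    | Sum.inr (Sum.inl w) => FreeGroup.of (Sum.inr (Sum.inl w))
    | Sum.inr (Sum.inr (Sum.inl _)) => FreeGroup.of (yGen X Y)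
    | Sum.inr (Sum.inr (Sum.inr n)) =>
        FreeGroup.of (yGen X Y) * (FreeGroup.of (nGen X Y (n + 1)))⁻¹ *
          FreeGroup.of (nGen X Y n) * FreeGroup.of (nGen X Y (n + 1))

/-- A subgroup `H` of a group `G` is a *free factor* of `G` if there exists a subgroup
`K ≤ G` such that the natural map `H ∗ K → G` induced by the inclusions is an
isomorphism. -/
def IsFreeFactor {G : Type*} [Group G] (H : Subgroup G) : Prop :=
  ∃ K : Subgroup G, Function.Bijective (Monoid.Coprod.lift H.subtype K.subtype)

/-- The set of generators `X ∪ Y ∪ {y} ∪ {t_0, …, t_{n-1}}` of `F_a`. -/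
def truncGenSet (X Y : Type) (n : ℕ) : Set (FreeGroup (ConstrGen X Y)) :=
  FreeGroup.of '' {g : ConstrGen X Y | match g with
    | Sum.inr (Sum.inr (Sum.inr k)) => k < n
    | _ => True}

/-! On `X ∪ Y ∪ {y} ∪ {t_0, …, t_{n-1}}` the map `φ` agrees with the composite of the Nielsen
automorphisms `z_k ↦ y z_{k+1}⁻¹ z_k z_{k+1}` (`k < n`) of `F_b`, each fixing all other basis
elements; each is invertible because `y` and `z_{k+1}` differ from `z_k`. Hence the subgroup in
question is the image under an automorphism of `F_b` of a subgroup generated by part of a basis,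
which is a free factor: its complement is generated by the rest of the basis. -/

open Monoid
open scoped Monoid.Coprod

theorem isFreeFactor_of_splitting {G : Type*} [Group G] {H K : Subgroup G} (r : G →* (H ∗ K))
    (hH : r.comp H.subtype = Coprod.inl) (hK : r.comp K.subtype = Coprod.inr)
    (hr : (Coprod.lift H.subtype K.subtype).comp r = MonoidHom.id G) : IsFreeFactor H := by
  have hl : r.comp (Coprod.lift H.subtype K.subtype) = MonoidHom.id _ :=
    Coprod.hom_ext (by rw [MonoidHom.comp_assoc, Coprod.lift_comp_inl, hH]; rfl)
      (by rw [MonoidHom.comp_assoc, Coprod.lift_comp_inr, hK]; rfl)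
  exact ⟨K, Function.bijective_iff_has_inverse.mpr
    ⟨r, DFunLike.congr_fun hl, DFunLike.congr_fun hr⟩⟩

theorem IsFreeFactor.map_mulEquiv {G G' : Type*} [Group G] [Group G'] {H : Subgroup G}
    (h : IsFreeFactor H) (e : G ≃* G') : IsFreeFactor (H.map (e : G →* G')) := by
  obtain ⟨K, hK⟩ := h
  refine ⟨K.map (e : G →* G'), ?_⟩
  have hcomm : ⇑(Coprod.lift (H.map (e : G →* G')).subtype (K.map (e : G →* G')).subtype) ∘
      ⇑(MulEquiv.coprodCongr (e.subgroupMap H) (e.subgroupMap K)) =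
      ⇑e ∘ ⇑(Coprod.lift H.subtype K.subtype) := by
    rw [← MonoidHom.coe_coe e, ← MonoidHom.coe_coe (MulEquiv.coprodCongr _ _),
      ← MonoidHom.coe_comp, ← MonoidHom.coe_comp]
    congr 1
    exact Coprod.hom_ext (MonoidHom.ext fun _ => rfl) (MonoidHom.ext fun _ => rfl)
  exact (Function.Bijective.of_comp_iff _ (MulEquiv.bijective _)).mp
    (hcomm ▸ (MulEquiv.bijective e).comp hK)

namespace FreeGroup

variable {α : Type*}

open Subgroup in
theorem isFreeFactor_closure_image_of (s : Set α) : IsFreeFactor (closure (of '' s)) := by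
  classical
  let r : FreeGroup α →* (closure (of '' s) ∗ closure (of '' sᶜ)) := lift fun a =>
    if h : a ∈ s then Coprod.inl ⟨of a, subset_closure (Set.mem_image_of_mem of h)⟩
    else Coprod.inr ⟨of a, subset_closure (Set.mem_image_of_mem of h)⟩
  refine isFreeFactor_of_splitting r ?_ ?_ ?_
  · refine MonoidHom.eq_of_eqOn_dense closure_closure_coe_preimage ?_
    rintro ⟨_, _⟩ ⟨a, ha, rfl⟩
    simp [r, ha]
  · refine MonoidHom.eq_of_eqOn_dense closure_closure_coe_preimage ?_
    rintro ⟨_, _⟩ ⟨a, ha, rfl⟩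
    simp [r, Set.notMem_of_mem_compl ha]
  · ext a
    by_cases ha : a ∈ s <;> simp [r, ha]

variable [DecidableEq α]

theorem lift_update_eqOn_closure (a : α) (w : FreeGroup α) :
    Set.EqOn (lift (Function.update of a w)) (MonoidHom.id _) (Subgroup.closure (of '' {a}ᶜ)) :=
  MonoidHom.eqOn_closure <| by
    rintro _ ⟨b, hb, rfl⟩
    simp [Function.update_of_ne (Set.mem_compl_singleton_iff.mp hb)]

theorem lift_update_comp_lift_update {a : α} {u v : FreeGroup α}
    (hu : u ∈ Subgroup.closure (of '' {a}ᶜ)) (hv : v ∈ Subgroup.closure (of '' {a}ᶜ)) :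
    (lift (Function.update of a (u⁻¹ * of a * v⁻¹))).comp
      (lift (Function.update of a (u * of a * v))) = MonoidHom.id _ := by
  ext b
  rcases eq_or_ne b a with rfl | hb
  · simp [lift_update_eqOn_closure b _ hu, lift_update_eqOn_closure b _ hv, mul_assoc]
  · simp [Function.update_of_ne hb]

def nielsenEquiv (a : α) {u v : FreeGroup α} (hu : u ∈ Subgroup.closure (of '' {a}ᶜ))
    (hv : v ∈ Subgroup.closure (of '' {a}ᶜ)) : FreeGroup α ≃* FreeGroup α :=
  MonoidHom.toMulEquiv (lift (Function.update of a (u * of a * v)))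
    (lift (Function.update of a (u⁻¹ * of a * v⁻¹))) (lift_update_comp_lift_update hu hv)
    (by simpa using lift_update_comp_lift_update (inv_mem hu) (inv_mem hv))

theorem nielsenEquiv_apply_of_self (a : α) {u v : FreeGroup α} (hu hv) :
    nielsenEquiv a (u := u) (v := v) hu hv (of a) = u * of a * v := by
  simp [nielsenEquiv]

theorem nielsenEquiv_apply_of_of_ne {a b : α} (h : b ≠ a) {u v : FreeGroup α} (hu hv) :
    nielsenEquiv a (u := u) (v := v) hu hv (of b) = of b := by
  simp [nielsenEquiv, Function.update_of_ne h]

end FreeGroup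

open FreeGroup (of)

section Truncation

variable (X Y : Type)

open Classical in
noncomputable def constrPhiStep (n : ℕ) : FreeGroup (ConstrGen X Y) ≃* FreeGroup (ConstrGen X Y) :=
  FreeGroup.nielsenEquiv (nGen X Y n) (u := of (yGen X Y) * (of (nGen X Y (n + 1)))⁻¹)
    (v := of (nGen X Y (n + 1)))
    (mul_mem (Subgroup.subset_closure ⟨_, by simp [yGen, nGen], rfl⟩)
      (inv_mem (Subgroup.subset_closure ⟨_, by simp [nGen], rfl⟩)))
    (Subgroup.subset_closure ⟨_, by simp [nGen], rfl⟩)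

noncomputable def constrPhiAut : ℕ → FreeGroup (ConstrGen X Y) ≃* FreeGroup (ConstrGen X Y)
  | 0 => MulEquiv.refl _
  | n + 1 => (constrPhiStep X Y n).trans (constrPhiAut n)

variable {X Y}

theorem constrPhi_apply_of_nGen (n : ℕ) :
    constrPhi X Y (of (nGen X Y n)) =
      of (yGen X Y) * (of (nGen X Y (n + 1)))⁻¹ * of (nGen X Y n) * of (nGen X Y (n + 1)) :=
  FreeGroup.lift_apply_of

open Classical in
theorem constrPhiStep_apply_of_nGen_self (n : ℕ) :
    constrPhiStep X Y n (of (nGen X Y n)) = constrPhi X Y (of (nGen X Y n)) :=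
  FreeGroup.nielsenEquiv_apply_of_self _ _ _

open Classical in
theorem constrPhiStep_apply_of_of_ne {n : ℕ} {g : ConstrGen X Y} (h : g ≠ nGen X Y n) :
    constrPhiStep X Y n (of g) = of g :=
  FreeGroup.nielsenEquiv_apply_of_of_ne h _ _

theorem constrPhiAut_apply_of_of_forall_ne {n : ℕ} {g : ConstrGen X Y} (hg : ∀ k < n, g ≠ nGen X Y k) :
    constrPhiAut X Y n (of g) = of g := by
  induction n with
  | zero => rfl
  | succ n ih =>
    rw [constrPhiAut, MulEquiv.trans_apply, constrPhiStep_apply_of_of_ne (hg n n.lt_succ_self),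
      ih fun k hk => hg k (hk.trans n.lt_succ_self)]

theorem eqOn_constrPhi_constrPhiAut (n : ℕ) :
    Set.EqOn (constrPhi X Y) (constrPhiAut X Y n) (truncGenSet X Y n) := by
  induction n with
  | zero =>
    rintro _ ⟨g, hg, rfl⟩
    rcases g with x | w | u | k <;> simp_all [constrPhi, constrPhiAut, yGen]
  | succ n ih =>
    rintro _ ⟨g, hg, rfl⟩
    rw [constrPhiAut, MulEquiv.trans_apply]
    by_cases hgn : g = nGen X Y n
    · subst hgn
      have hz : ∀ k, n ≤ k → constrPhiAut X Y n (of (nGen X Y k)) = of (nGen X Y k) := fun k hk =>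
        constrPhiAut_apply_of_of_forall_ne fun j hj => by simp only [nGen, ne_eq, Sum.inr.injEq]; omega
      have hy : constrPhiAut X Y n (of (yGen X Y)) = of (yGen X Y) :=
        constrPhiAut_apply_of_of_forall_ne fun j _ => by simp [yGen, nGen]
      rw [constrPhiStep_apply_of_nGen_self, constrPhi_apply_of_nGen]
      simp only [map_mul, map_inv, hy, hz n le_rfl, hz (n + 1) n.le_succ]
    · rw [constrPhiStep_apply_of_of_ne hgn]
      refine ih ⟨g, ?_, rfl⟩
      rcases g with x | w | u | k
      iterate 3 trivial
      exact Nat.lt_of_le_of_ne (Nat.lt_succ_iff.mp hg) fun h => hgn (congrArg (nGen X Y) h)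

end Truncation

/-- For every `n ∈ ℕ`, the subgroup `φ(⟨X ∪ Y ∪ {y} ∪ {t_0, …, t_{n−1}}⟩)` is a free
factor of `F_b`. -/
theorem map_constrPhi_truncated_isFreeFactor (X Y : Type) (n : ℕ) :
    IsFreeFactor (Subgroup.map (constrPhi X Y) (Subgroup.closure (truncGenSet X Y n))) := by
  rw [MonoidHom.map_closure, (eqOn_constrPhi_constrPhiAut n).image_eq,
    ← MonoidHom.coe_coe (constrPhiAut X Y n), ← MonoidHom.map_closure]
  exact (FreeGroup.isFreeFactor_closure_image_of _).map_mulEquiv (constrPhiAut X Y n)
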